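/- Let α = log 3 / log 2 and β* = log 5 / log 2. Then the set {u ∈ C(K) : sup_{n≥1} a_n(u) < ∞} is strictly contained in the intersection over β ∈ (α, β*) of the sets {u ∈ C(K) : Σ_{n=1}^{∞} 2^{(β−β*)n} a_n(u) < ∞}; that is, there exists a continuous u : K → ℝ with Σ_{n=1}^{∞} 2^{(β−β*)n} a_n(u) < ∞ for every β ∈ (α, β*) but sup_{n≥1} a_n(u) = ∞. -/

import Mathlib

open Set

namespace SG

/-- The three vertices of the Sierpiński gasket. -/
noncomputable def p : Fin 3 → ℝ × ℝ := ![(0, 0), (1, 0), (1 / 2, Real.sqrt 3 / 2)]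

/-- The three contractions `f_i(x) = (x + p_i)/2`. -/
noncomputable def f (i : Fin 3) (x : ℝ × ℝ) : ℝ × ℝ :=
  ((x.1 + (p i).1) / 2, (x.2 + (p i).2) / 2)

/-- The vertex sets `V₀ = {p₀,p₁,p₂}`, `V_{n+1} = ⋃ f_i(V_n)`. -/
noncomputable def V : ℕ → Set (ℝ × ℝ)
  | 0 => Set.range p
  | n + 1 => ⋃ i : Fin 3, f i '' V n

/-- The Sierpiński gasket: the closure of `V_* = ⋃_n V_n`. -/
noncomputable def K : Set (ℝ × ℝ) := closure (⋃ n, V n)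

/-- For a word `w = w₁…w_n`, the composition `f_{w₁} ∘ … ∘ f_{w_n}`. -/
noncomputable def fw {n : ℕ} (w : Fin n → Fin 3) (x : ℝ × ℝ) : ℝ × ℝ :=
  (List.ofFn w).foldr f x

/-- The graph energy
`a_n(u) = (5/3)^n Σ_{w ∈ W_n} Σ_{{p,q} ⊆ V_w, p ≠ q} (u(p) − u(q))²`
(the inner sum over unordered pairs is written as half of the ordered sum). -/
noncomputable def a (n : ℕ) (u : ℝ × ℝ → ℝ) : ℝ :=
  (5 / 3) ^ n * ∑ w : Fin n → Fin 3,
    (∑ i : Fin 3, ∑ j : Fin 3, (u (fw w (p i)) - u (fw w (p j))) ^ 2) / 2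

/-- `F_loc`: continuous functions on `K` with `sup_{n≥1} a_n(u) < ∞`. -/
def Floc : Set (ℝ × ℝ → ℝ) :=
  {u | ContinuousOn u K ∧ BddAbove (Set.range fun n : ℕ => a (n + 1) u)}

/-- `F_β`: continuous functions on `K` with `Σ_{n≥1} 2^{(β−β*)n} a_n(u) < ∞`,
where `β* = log 5 / log 2`. -/
def Fbeta (β : ℝ) : Set (ℝ × ℝ → ℝ) :=
  {u | ContinuousOn u K ∧
    Summable fun n : ℕ =>
      (2 : ℝ) ^ ((β - Real.log 5 / Real.log 2) * (n + 1)) * a (n + 1) u}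

end SG

/-!
Harmonic functions on the gasket are uniform limits of piecewise affine interpolants whose vertex
values are refined by the "1/5–2/5 rule"; this rule multiplies the graph energy by `3/5` per
level, so `a n` of a harmonic function does not depend on `n`. Gluing three harmonic pieces gives
a tent function vanishing on `V₀` with `a n = 10` for `n ≥ 1`. Let `u` be the sum of the copies of
the tent placed in the cells `f 0^k (f 1 K)`, the `k`-th one scaled by `√(3/5)^(k+1)`: the scaling
exactly compensates the renormalization `(5/3)^n`, so each copy adds `10` to `a (n + 1) u` once
`n > k`, and `a (n + 1) u = 10 n`. Thus `a n u` is unbounded but grows only linearly, so it is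
summable against the geometric weights `2^((β - β*) n)`; for bounded `a n` this is immediate.
-/

open Filter Topology

namespace SG

/-- The closed triangle with vertices `p 0`, `p 1`, `p 2`. -/
def Δ : Set (ℝ × ℝ) :=
  {x | 0 ≤ x.2 ∧ x.2 ≤ √3 * x.1 ∧ x.2 ≤ √3 * (1 - x.1)}

noncomputable def finv (i : Fin 3) (x : ℝ × ℝ) : ℝ × ℝ :=
  (2 * x.1 - (p i).1, 2 * x.2 - (p i).2)

lemma finv_f (i : Fin 3) (x : ℝ × ℝ) : finv i (f i x) = x := by
  simp only [finv, f]; ext <;> ring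

lemma f_p (i : Fin 3) : f i (p i) = p i := by
  fin_cases i <;> ext <;> norm_num [f, p]

lemma p_mem_Δ (i : Fin 3) : p i ∈ Δ := by
  have := Real.sqrt_nonneg 3
  fin_cases i <;> norm_num [Δ, p]
  constructor <;> linarith

lemma f_mem_Δ (j : Fin 3) {x : ℝ × ℝ} (hx : x ∈ Δ) : f j x ∈ Δ := by
  have := Real.sqrt_nonneg 3
  obtain ⟨h1, h2, h3⟩ := hx
  fin_cases j <;> norm_num [Δ, f, p] <;> refine ⟨?_, ?_, ?_⟩ <;> nlinarith

/-- Two distinct cells `f i Δ` and `f j Δ` meet only in `f j (p i) = f i (p j)`. -/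
lemma eq_p_of_finv_f_mem_Δ {i j : Fin 3} (hij : i ≠ j) {y : ℝ × ℝ} (hy : y ∈ Δ)
    (h : finv i (f j y) ∈ Δ) : y = p i ∧ finv i (f j y) = p j := by
  have := Real.sqrt_pos.2 (show (0:ℝ) < 3 by norm_num)
  obtain ⟨h1, h2, h3⟩ := hy
  obtain ⟨g1, g2, g3⟩ := h
  fin_cases i <;> fin_cases j <;> (try exact absurd rfl hij) <;>
    norm_num [finv, f, p, Prod.ext_iff] at g1 g2 g3 ⊢ <;> refine ⟨⟨?_, ?_⟩, ?_, ?_⟩ <;> nlinarith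

lemma isClosed_Δ : IsClosed Δ := by
  refine (isClosed_le continuous_const continuous_snd).inter
    ((isClosed_le continuous_snd ?_).inter (isClosed_le continuous_snd ?_)) <;> fun_prop

lemma isBounded_Δ : Bornology.IsBounded Δ := by
  refine (Metric.isBounded_Icc (0 : ℝ × ℝ) (1, 1)).subset fun x ⟨h1, h2, h3⟩ => ?_
  have := Real.sqrt_pos.2 (show (0:ℝ) < 3 by norm_num)
  have := Real.sq_sqrt (show (0:ℝ) ≤ 3 by norm_num)
  refine ⟨⟨?_, ?_⟩, ?_, ?_⟩ <;> simp only [Prod.fst_zero, Prod.snd_zero] <;> nlinarith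

lemma K_subset_Δ : K ⊆ Δ :=
  closure_minimal (iUnion_subset fun n => by
    induction n with
    | zero => exact range_subset_iff.2 p_mem_Δ
    | succ n ih => exact iUnion_subset fun j => image_subset_iff.2 fun x hx => f_mem_Δ j (ih hx))
    isClosed_Δ

lemma isCompact_K : IsCompact K :=
  Metric.isCompact_of_isClosed_isBounded isClosed_closure (isBounded_Δ.subset K_subset_Δ)

lemma V_subset_K (n : ℕ) : V n ⊆ K := (subset_iUnion V n).trans subset_closure

lemma p_mem_K (i : Fin 3) : p i ∈ K := V_subset_K 0 (mem_range_self i)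

lemma continuous_f (i : Fin 3) : Continuous (f i) := by unfold f; fun_prop

lemma continuous_finv (i : Fin 3) : Continuous (finv i) := by unfold finv; fun_prop

lemma f_mem_K (j : Fin 3) {x : ℝ × ℝ} (hx : x ∈ K) : f j x ∈ K := by
  refine image_closure_subset_closure_image (continuous_f j) ⟨x, hx, rfl⟩ |> closure_mono ?_
  rintro _ ⟨y, hy, rfl⟩
  obtain ⟨n, hn⟩ := mem_iUnion.1 hy
  exact mem_iUnion.2 ⟨n + 1, mem_iUnion.2 ⟨j, y, hn, rfl⟩⟩

lemma K_eq_iUnion_image : K = ⋃ j, f j '' K := by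
  refine (closure_minimal (iUnion_subset fun n => ?_) ?_).antisymm
    (iUnion_subset fun j => image_subset_iff.2 fun x => f_mem_K j)
  · cases n with
    | zero => exact range_subset_iff.2 fun i => mem_iUnion.2 ⟨i, p i, p_mem_K i, f_p i⟩
    | succ n => exact iUnion_mono fun j => image_mono (V_subset_K n)
  · exact isClosed_iUnion_of_finite fun j => (isCompact_K.image (continuous_f j)).isClosed

open Classical in
/-- On each cell `f j Δ` this is `g j ∘ finv j`; where two cells meet, the first index wins. -/
noncomputable def glue (g : Fin 3 → ℝ × ℝ → ℝ) (x : ℝ × ℝ) : ℝ :=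
  if finv 0 x ∈ Δ then g 0 (finv 0 x)
  else if finv 1 x ∈ Δ then g 1 (finv 1 x)
  else if finv 2 x ∈ Δ then g 2 (finv 2 x)
  else 0

/-- Agreement at the junction point `f j (p i) = f i (p j)` of the cells `i` and `j`. -/
def Compatible (g : Fin 3 → ℝ × ℝ → ℝ) : Prop := ∀ i j, g i (p j) = g j (p i)

section Glue

variable {g : Fin 3 → ℝ × ℝ → ℝ}

lemma glue_f (hg : Compatible g) (j : Fin 3) {y : ℝ × ℝ} (hy : y ∈ Δ) :
    glue g (f j y) = g j y := by
  have key : ∀ i, finv i (f j y) ∈ Δ → g i (finv i (f j y)) = g j y := fun i hi => by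
    rcases eq_or_ne i j with rfl | hij
    · rw [finv_f]
    · obtain ⟨rfl, h⟩ := eq_p_of_finv_f_mem_Δ hij hy hi
      rw [h, hg]
  have hj : finv j (f j y) ∈ Δ := by rwa [finv_f]
  unfold glue
  split_ifs with h0 h1 h2
  · exact key 0 h0
  · exact key 1 h1
  · exact key 2 h2
  · fin_cases j <;> contradiction

lemma glue_p (hg : Compatible g) (i : Fin 3) : glue g (p i) = g i (p i) := by
  rw [← f_p i, glue_f hg i (p_mem_Δ i), f_p]

lemma continuousOn_glue (hg : Compatible g) (hc : ∀ j, ContinuousOn (g j) K) :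
    ContinuousOn (glue g) K := by
  rw [K_eq_iUnion_image]
  refine (locallyFinite_of_finite _).continuousOn_iUnion
    (fun j => (isCompact_K.image (continuous_f j)).isClosed) fun j => ?_
  have hmaps : MapsTo (finv j) (f j '' K) K := by
    rintro _ ⟨y, hy, rfl⟩
    rwa [finv_f]
  refine ((hc j).comp (continuous_finv j).continuousOn hmaps).congr ?_
  rintro _ ⟨y, hy, rfl⟩
  simp only [Function.comp_apply, finv_f, glue_f hg j (K_subset_Δ hy)]

lemma abs_glue_le (hg : Compatible g) {C : ℝ} (hC : ∀ j, ∀ y ∈ K, |g j y| ≤ C) {x : ℝ × ℝ}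
    (hx : x ∈ K) : |glue g x| ≤ C := by
  rw [K_eq_iUnion_image] at hx
  obtain ⟨j, y, hy, rfl⟩ := mem_iUnion.1 hx
  rw [glue_f hg j (K_subset_Δ hy)]
  exact hC j y hy

end Glue

/-- Harmonic extension: the value at the junction `f i (p j)`, `i ≠ j`, of the harmonic
function with boundary values `b` is `(2 b i + 2 b j + b k) / 5` (the "1/5–2/5 rule"). -/
noncomputable def harmExt (i : Fin 3) (b : Fin 3 → ℝ) : Fin 3 → ℝ := fun j =>
  if i = j then b i else (b i + b j + (b 0 + b 1 + b 2)) / 5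

lemma harmExt_self (i : Fin 3) (b : Fin 3 → ℝ) : harmExt i b i = b i := by simp [harmExt]

lemma harmExt_comm (i j : Fin 3) (b : Fin 3 → ℝ) : harmExt i b j = harmExt j b i := by
  unfold harmExt
  rcases eq_or_ne i j with rfl | hij
  · rfl
  · rw [if_neg hij, if_neg hij.symm]; ring

noncomputable def Q (b : Fin 3 → ℝ) : ℝ := ∑ i, ∑ j, (b i - b j) ^ 2

lemma Q_eq (b : Fin 3 → ℝ) : Q b = 2 * ((b 0 - b 1) ^ 2 + (b 0 - b 2) ^ 2 + (b 1 - b 2) ^ 2) := by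
  simp only [Q, Fin.sum_univ_three]; ring

lemma Q_const_mul (c : ℝ) (b : Fin 3 → ℝ) : Q (fun i => c * b i) = c ^ 2 * Q b := by
  simp only [Q_eq]; ring

lemma sq_sub_le_Q (b : Fin 3 → ℝ) (i j : Fin 3) : (b i - b j) ^ 2 ≤ Q b :=
  (Finset.single_le_sum (f := fun j => (b i - b j) ^ 2) (fun _ _ => sq_nonneg _)
    (Finset.mem_univ j)).trans
    (Finset.single_le_sum (f := fun i => ∑ j, (b i - b j) ^ 2)
      (fun _ _ => Finset.sum_nonneg fun _ _ => sq_nonneg _) (Finset.mem_univ i))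

lemma abs_sub_le_sqrt_Q (b : Fin 3 → ℝ) (i j : Fin 3) : |b i - b j| ≤ √(Q b) :=
  Real.abs_le_sqrt (sq_sub_le_Q b i j)

lemma Q_nonneg (b : Fin 3 → ℝ) : 0 ≤ Q b := (sq_nonneg _).trans (sq_sub_le_Q b 0 0)

/-- This is where the renormalization factor `5/3` of `a n` comes from. -/
lemma sum_Q_harmExt (b : Fin 3 → ℝ) : ∑ j, Q (harmExt j b) = 3 / 5 * Q b := by
  simp only [Fin.sum_univ_three, Q_eq]
  norm_num [harmExt, Fin.ext_iff]
  ring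

lemma sqrt_Q_harmExt_le (j : Fin 3) (b : Fin 3 → ℝ) :
    √(Q (harmExt j b)) ≤ √(3 / 5) * √(Q b) := by
  rw [← Real.sqrt_mul (by norm_num)]
  refine Real.sqrt_le_sqrt ?_
  have := sum_Q_harmExt b
  simp only [Fin.sum_univ_three] at this
  fin_cases j <;> simp <;> linarith [Q_nonneg (harmExt 0 b), Q_nonneg (harmExt 1 b),
    Q_nonneg (harmExt 2 b)]

/-- `approx 0 b` is the affine interpolation of `b` on `Δ`; `approx m b` is piecewise affine on
the cells of level `m`, with harmonically extended vertex values. -/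
noncomputable def approx : ℕ → (Fin 3 → ℝ) → ℝ × ℝ → ℝ
  | 0, b, x => b 0 + (b 1 - b 0) * x.1 + (2 * b 2 - b 0 - b 1) / √3 * x.2
  | m + 1, b, x => glue (fun j => approx m (harmExt j b)) x

lemma approx_p (m : ℕ) (b : Fin 3 → ℝ) (i : Fin 3) : approx m b (p i) = b i := by
  induction m generalizing b i with
  | zero =>
    have := Real.sqrt_pos.2 (show (0:ℝ) < 3 by norm_num)
    fin_cases i <;> simp [approx, p]
    field_simp
    ring
  | succ m ih =>
    have hg : Compatible fun j => approx m (harmExt j b) := fun i j => by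
      simp only [ih, harmExt_comm]
    rw [approx, glue_p hg, ih, harmExt_self]

lemma compatible_approx (m : ℕ) (b : Fin 3 → ℝ) :
    Compatible fun j => approx m (harmExt j b) := fun i j => by
  simp only [approx_p, harmExt_comm]

lemma approx_succ_f (m : ℕ) (b : Fin 3 → ℝ) (j : Fin 3) {y : ℝ × ℝ} (hy : y ∈ Δ) :
    approx (m + 1) b (f j y) = approx m (harmExt j b) y :=
  glue_f (compatible_approx m b) j hy

lemma continuousOn_approx (m : ℕ) (b : Fin 3 → ℝ) : ContinuousOn (approx m b) K := by
  induction m generalizing b with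
  | zero => exact Continuous.continuousOn (by simp only [approx]; fun_prop)
  | succ m ih => exact continuousOn_glue (compatible_approx m b) fun j => ih _

lemma abs_approx_zero_sub_le (c : Fin 3 → ℝ) {y : ℝ × ℝ} (hy : y ∈ Δ) :
    |approx 0 c y - c 0| ≤ 2 * √(Q c) := by
  obtain ⟨h1, h2, h3⟩ := hy
  have hs := Real.sqrt_pos.2 (show (0:ℝ) < 3 by norm_num)
  have hs2 := Real.sq_sqrt (show (0:ℝ) ≤ 3 by norm_num)
  -- barycentric coordinates of `y`
  set t₁ := y.1 - y.2 / √3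
  set t₂ := 2 * y.2 / √3
  have ht₁ : 0 ≤ t₁ ∧ t₁ ≤ 1 := by
    constructor <;> simp only [t₁] <;> rw [← sub_nonneg] <;> field_simp <;> nlinarith
  have ht₂ : 0 ≤ t₂ ∧ t₂ ≤ 1 := by
    constructor <;> simp only [t₂] <;> rw [← sub_nonneg] <;> field_simp <;> nlinarith
  have key : ∀ {t : ℝ}, 0 ≤ t ∧ t ≤ 1 → ∀ i, |t * (c i - c 0)| ≤ √(Q c) := fun ht i => by
    rw [abs_mul, abs_of_nonneg ht.1]
    exact (mul_le_of_le_one_left (abs_nonneg _) ht.2).trans (abs_sub_le_sqrt_Q c i 0)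
  have e : approx 0 c y - c 0 = t₁ * (c 1 - c 0) + t₂ * (c 2 - c 0) := by
    simp only [approx, t₁, t₂]; field_simp; ring
  rw [e, two_mul]
  exact (abs_add_le _ _).trans (add_le_add (key ht₁ 1) (key ht₂ 2))

lemma exists_eq_f_of_mem_K {x : ℝ × ℝ} (hx : x ∈ K) : ∃ j, ∃ y ∈ K, f j y = x := by
  rw [K_eq_iUnion_image] at hx
  obtain ⟨j, hj⟩ := mem_iUnion.1 hx
  exact ⟨j, hj⟩

lemma abs_approx_succ_sub_le (m : ℕ) (b : Fin 3 → ℝ) {x : ℝ × ℝ} (hx : x ∈ K) :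
    |approx (m + 1) b x - approx m b x| ≤ 6 * √(3 / 5) ^ m * √(Q b) := by
  induction m generalizing b x with
  | zero =>
    obtain ⟨j, y, hy, rfl⟩ := exists_eq_f_of_mem_K hx
    set c := harmExt j b
    have hQc : √(Q c) ≤ √(Q b) :=
      (sqrt_Q_harmExt_le j b).trans (mul_le_of_le_one_left (Real.sqrt_nonneg _)
        (Real.sqrt_le_one.2 (by norm_num)))
    have h₁ := abs_approx_zero_sub_le c (K_subset_Δ hy)
    have h₂ := abs_sub_le_sqrt_Q c 0 j
    have h₃ := abs_sub_le_sqrt_Q b j 0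
    have h₄ := abs_approx_zero_sub_le b (f_mem_Δ j (K_subset_Δ hy))
    rw [approx_succ_f 0 b j (K_subset_Δ hy), pow_zero, mul_one]
    calc |approx 0 c y - approx 0 b (f j y)|
        = |(approx 0 c y - c 0) + (c 0 - c j) + (b j - b 0) - (approx 0 b (f j y) - b 0)| := by
          rw [show c j = b j from harmExt_self j b]; ring_nf
      _ ≤ |approx 0 c y - c 0| + |c 0 - c j| + |b j - b 0| + |approx 0 b (f j y) - b 0| :=
          (abs_sub _ _).trans (by gcongr; exact abs_add_three _ _ _)
      _ ≤ 6 * √(Q b) := by linarith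
  | succ m ih =>
    obtain ⟨j, y, hy, rfl⟩ := exists_eq_f_of_mem_K hx
    rw [approx_succ_f _ b j (K_subset_Δ hy), approx_succ_f _ b j (K_subset_Δ hy)]
    calc _ ≤ 6 * √(3 / 5) ^ m * √(Q (harmExt j b)) := ih _ hy
      _ ≤ 6 * √(3 / 5) ^ m * (√(3 / 5) * √(Q b)) := by gcongr; exact sqrt_Q_harmExt_le j b
      _ = 6 * √(3 / 5) ^ (m + 1) * √(Q b) := by ring

lemma summable_geometric_sqrt_three_fifths : Summable fun m : ℕ => √(3 / 5) ^ m :=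
  summable_geometric_of_lt_one (Real.sqrt_nonneg _) ((Real.sqrt_lt' one_pos).2 (by norm_num))

/-- The harmonic function on `K` with boundary values `b`, as the uniform limit of `approx m b`. -/
noncomputable def harmonic (b : Fin 3 → ℝ) (x : ℝ × ℝ) : ℝ :=
  approx 0 b x + ∑' m, (approx (m + 1) b x - approx m b x)

lemma summable_approx_succ_sub (b : Fin 3 → ℝ) {x : ℝ × ℝ} (hx : x ∈ K) :
    Summable fun m => approx (m + 1) b x - approx m b x :=
  (summable_geometric_sqrt_three_fifths.mul_left 6 |>.mul_right √(Q b)).of_norm_bounded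
    fun m => abs_approx_succ_sub_le m b hx

lemma tendsto_approx (b : Fin 3 → ℝ) {x : ℝ × ℝ} (hx : x ∈ K) :
    Tendsto (fun m => approx m b x) atTop (𝓝 (harmonic b x)) := by
  have := ((summable_approx_succ_sub b hx).hasSum.tendsto_sum_nat).const_add (approx 0 b x)
  rw [harmonic]
  simpa only [Finset.sum_range_sub (fun m => approx m b x), add_sub_cancel] using this

lemma harmonic_f (b : Fin 3 → ℝ) (j : Fin 3) {y : ℝ × ℝ} (hy : y ∈ K) :
    harmonic b (f j y) = harmonic (harmExt j b) y := by
  refine tendsto_nhds_unique ((tendsto_add_atTop_iff_nat 1).2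
    (tendsto_approx b (f_mem_K j hy))) ?_
  simpa only [approx_succ_f _ b j (K_subset_Δ hy)] using tendsto_approx (harmExt j b) hy

lemma harmonic_p (b : Fin 3 → ℝ) (i : Fin 3) : harmonic b (p i) = b i :=
  tendsto_nhds_unique (tendsto_approx b (p_mem_K i))
    (by simpa only [approx_p] using tendsto_const_nhds)

lemma continuousOn_harmonic (b : Fin 3 → ℝ) : ContinuousOn (harmonic b) K :=
  (continuousOn_approx 0 b).add <| continuousOn_tsum
    (fun m => (continuousOn_approx (m + 1) b).sub (continuousOn_approx m b))
    (summable_geometric_sqrt_three_fifths.mul_left 6 |>.mul_right √(Q b))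
    fun m _ hx => abs_approx_succ_sub_le m b hx

noncomputable def tent : ℝ × ℝ → ℝ :=
  glue fun j => harmonic fun i => if i = j then 0 else 1

lemma compatible_tent : Compatible fun j => harmonic fun i => if i = j then 0 else 1 :=
  fun i j => by simp only [harmonic_p, eq_comm]

lemma tent_f (j : Fin 3) {y : ℝ × ℝ} (hy : y ∈ Δ) :
    tent (f j y) = harmonic (fun i => if i = j then 0 else 1) y :=
  glue_f compatible_tent j hy

lemma tent_p (i : Fin 3) : tent (p i) = 0 := by
  rw [tent, glue_p compatible_tent, harmonic_p, if_pos rfl]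

lemma continuousOn_tent : ContinuousOn tent K :=
  continuousOn_glue compatible_tent fun _ => continuousOn_harmonic _

noncomputable def localize (j : Fin 3) (g : ℝ × ℝ → ℝ) : ℝ × ℝ → ℝ := glue (Pi.single j g)

section Localize

variable {g : ℝ × ℝ → ℝ}

lemma compatible_single (hg : ∀ i, g (p i) = 0) (j : Fin 3) : Compatible (Pi.single j g) :=
  fun i k => by simp only [Pi.single_apply, ite_apply, hg, Pi.zero_apply, ite_self]

lemma localize_f_self (hg : ∀ i, g (p i) = 0) (j : Fin 3) {y : ℝ × ℝ} (hy : y ∈ Δ) :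
    localize j g (f j y) = g y := by
  rw [localize, glue_f (compatible_single hg j) j hy, Pi.single_eq_same]

lemma localize_f_of_ne (hg : ∀ i, g (p i) = 0) {i j : Fin 3} (hij : i ≠ j) {y : ℝ × ℝ}
    (hy : y ∈ Δ) :
    localize j g (f i y) = 0 := by
  rw [localize, glue_f (compatible_single hg j) i hy, Pi.single_eq_of_ne hij, Pi.zero_apply]

lemma localize_p (hg : ∀ i, g (p i) = 0) (j i : Fin 3) : localize j g (p i) = 0 := by
  rw [localize, glue_p (compatible_single hg j)]
  rcases eq_or_ne i j with rfl | hij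
  · rw [Pi.single_eq_same, hg]
  · rw [Pi.single_eq_of_ne hij, Pi.zero_apply]

lemma continuousOn_localize (hg : ∀ i, g (p i) = 0) (hc : ContinuousOn g K) (j : Fin 3) :
    ContinuousOn (localize j g) K :=
  continuousOn_glue (compatible_single hg j) fun i => by
    rcases eq_or_ne i j with rfl | hij
    · rwa [Pi.single_eq_same]
    · rw [Pi.single_eq_of_ne hij]; exact continuousOn_const

lemma abs_localize_le (hg : ∀ i, g (p i) = 0) {C : ℝ} (hC : ∀ y ∈ K, |g y| ≤ C) (j : Fin 3)
    {x : ℝ × ℝ} (hx : x ∈ K) :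
    |localize j g x| ≤ C :=
  abs_glue_le (compatible_single hg j) (fun i y hy => by
    rcases eq_or_ne i j with rfl | hij
    · rw [Pi.single_eq_same]; exact hC y hy
    · rw [Pi.single_eq_of_ne hij, Pi.zero_apply, abs_zero, ← abs_zero, ← hg 0]
      exact hC _ (p_mem_K 0)) hx

end Localize

noncomputable def bump (k : ℕ) : ℝ × ℝ → ℝ := (localize 0)^[k] (localize 1 tent)

lemma bump_succ (k : ℕ) : bump (k + 1) = localize 0 (bump k) :=
  Function.iterate_succ_apply' _ _ _

lemma bump_p (k : ℕ) (i : Fin 3) : bump k (p i) = 0 := by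
  induction k generalizing i with
  | zero => exact localize_p tent_p 1 i
  | succ k ih => rw [bump_succ]; exact localize_p ih 0 i

lemma bump_zero_f_one {y : ℝ × ℝ} (hy : y ∈ Δ) : bump 0 (f 1 y) = tent y :=
  localize_f_self tent_p 1 hy

lemma bump_zero_f_of_ne {j : Fin 3} (hj : j ≠ 1) {y : ℝ × ℝ} (hy : y ∈ Δ) : bump 0 (f j y) = 0 :=
  localize_f_of_ne tent_p hj hy

lemma bump_succ_f_zero (k : ℕ) {y : ℝ × ℝ} (hy : y ∈ Δ) : bump (k + 1) (f 0 y) = bump k y := by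
  rw [bump_succ, localize_f_self (bump_p k) 0 hy]

lemma bump_succ_f_of_ne (k : ℕ) {j : Fin 3} (hj : j ≠ 0) {y : ℝ × ℝ} (hy : y ∈ Δ) :
    bump (k + 1) (f j y) = 0 := by
  rw [bump_succ, localize_f_of_ne (bump_p k) hj hy]

lemma continuousOn_bump (k : ℕ) : ContinuousOn (bump k) K := by
  induction k with
  | zero => exact continuousOn_localize tent_p continuousOn_tent 1
  | succ k ih => rw [bump_succ]; exact continuousOn_localize (bump_p k) ih 0

lemma abs_bump_le {C : ℝ} (hC : ∀ y ∈ K, |tent y| ≤ C) (k : ℕ) {x : ℝ × ℝ} (hx : x ∈ K) :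
    |bump k x| ≤ C := by
  induction k generalizing x with
  | zero => exact abs_localize_le tent_p hC 1 hx
  | succ k ih => rw [bump_succ]; exact abs_localize_le (bump_p k) (fun y hy => ih hy) 0 hx

noncomputable def u (x : ℝ × ℝ) : ℝ := ∑' k, √(3 / 5) ^ (k + 1) * bump k x

lemma exists_bound_tent : ∃ C, ∀ y ∈ K, |tent y| ≤ C :=
  isCompact_K.exists_bound_of_continuousOn continuousOn_tent

lemma norm_u_term_le {C : ℝ} (hC : ∀ y ∈ K, |tent y| ≤ C) (k : ℕ) {x : ℝ × ℝ} (hx : x ∈ K) :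
    ‖√(3 / 5) ^ (k + 1) * bump k x‖ ≤ √(3 / 5) * C * √(3 / 5) ^ k := by
  rw [Real.norm_eq_abs, abs_mul, abs_of_nonneg (by positivity), pow_succ]
  calc _ ≤ √(3 / 5) ^ k * √(3 / 5) * C := by gcongr; exact abs_bump_le hC k hx
    _ = _ := by ring

lemma summable_u {x : ℝ × ℝ} (hx : x ∈ K) :
    Summable fun k => √(3 / 5) ^ (k + 1) * bump k x := by
  obtain ⟨C, hC⟩ := exists_bound_tent
  exact (summable_geometric_sqrt_three_fifths.mul_left _).of_norm_bounded
    fun k => norm_u_term_le hC k hx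

lemma continuousOn_u : ContinuousOn u K := by
  obtain ⟨C, hC⟩ := exists_bound_tent
  exact continuousOn_tsum (fun k => continuousOn_const.mul (continuousOn_bump k))
    (summable_geometric_sqrt_three_fifths.mul_left _) fun k _ hx => norm_u_term_le hC k hx

lemma u_p (i : Fin 3) : u (p i) = 0 := by
  simp only [u, bump_p, mul_zero, tsum_zero]

lemma u_f_zero {y : ℝ × ℝ} (hy : y ∈ K) : u (f 0 y) = √(3 / 5) * u y := by
  rw [u, (summable_u (f_mem_K 0 hy)).tsum_eq_zero_add, u, ← tsum_mul_left]
  simp only [bump_zero_f_of_ne (by decide : (0 : Fin 3) ≠ 1) (K_subset_Δ hy),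
    bump_succ_f_zero _ (K_subset_Δ hy), mul_zero, zero_add, pow_succ]
  congr 1; ext k; ring

lemma u_f_one {y : ℝ × ℝ} (hy : y ∈ K) : u (f 1 y) = √(3 / 5) * tent y := by
  rw [u, (summable_u (f_mem_K 1 hy)).tsum_eq_zero_add]
  simp only [bump_zero_f_one (K_subset_Δ hy), bump_succ_f_of_ne _ (by decide : (1 : Fin 3) ≠ 0)
    (K_subset_Δ hy), mul_zero, tsum_zero, add_zero, zero_add, pow_one]

lemma u_f_two {y : ℝ × ℝ} (hy : y ∈ K) : u (f 2 y) = 0 := by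
  rw [u, (summable_u (f_mem_K 2 hy)).tsum_eq_zero_add]
  simp only [bump_zero_f_of_ne (by decide : (2 : Fin 3) ≠ 1) (K_subset_Δ hy),
    bump_succ_f_of_ne _ (by decide : (2 : Fin 3) ≠ 0) (K_subset_Δ hy), mul_zero, tsum_zero,
    add_zero]

noncomputable def energy (n : ℕ) (g : ℝ × ℝ → ℝ) : ℝ :=
  ∑ w : Fin n → Fin 3, Q fun i => g (fw w (p i))

lemma a_eq_energy (n : ℕ) (g : ℝ × ℝ → ℝ) : a n g = (5 / 3) ^ n * energy n g / 2 := by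
  rw [a, energy, mul_div_assoc, Finset.sum_div]
  rfl

lemma fw_cons {n : ℕ} (j : Fin 3) (w : Fin n → Fin 3) (x : ℝ × ℝ) :
    fw (Fin.cons j w : Fin (n + 1) → Fin 3) x = f j (fw w x) := by
  simp only [fw, List.ofFn_succ, Fin.cons_zero, Fin.cons_succ, List.foldr_cons]

lemma fw_mem_K {n : ℕ} (w : Fin n → Fin 3) {x : ℝ × ℝ} (hx : x ∈ K) : fw w x ∈ K := by
  induction n with
  | zero => exact hx
  | succ n ih =>
    rw [← Fin.cons_self_tail w, fw_cons]
    exact f_mem_K _ (ih _)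

lemma energy_zero (g : ℝ × ℝ → ℝ) : energy 0 g = Q fun i => g (p i) := by
  simp [energy, fw]

lemma energy_succ (n : ℕ) (g : ℝ × ℝ → ℝ) : energy (n + 1) g = ∑ j, energy n (g ∘ f j) := by
  rw [energy, ← (Fin.consEquiv fun _ => Fin 3).sum_comp, Fintype.sum_prod_type]
  exact Finset.sum_congr rfl fun j _ => Finset.sum_congr rfl fun w _ => by
    simp only [Function.comp_apply, ← fw_cons]; rfl

lemma energy_congr (n : ℕ) {g g' : ℝ × ℝ → ℝ} (h : EqOn g g' K) : energy n g = energy n g' :=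
  Finset.sum_congr rfl fun w _ => by simp only [h (fw_mem_K w (p_mem_K _))]

lemma energy_const_mul (n : ℕ) (c : ℝ) (g : ℝ × ℝ → ℝ) :
    energy n (fun x => c * g x) = c ^ 2 * energy n g := by
  simp only [energy, Q_const_mul, Finset.mul_sum]

lemma energy_harmonic (n : ℕ) (b : Fin 3 → ℝ) : energy n (harmonic b) = (3 / 5) ^ n * Q b := by
  induction n generalizing b with
  | zero => simp only [energy_zero, harmonic_p, pow_zero, one_mul]
  | succ n ih =>
    have h : ∀ j, energy n (harmonic b ∘ f j) = energy n (harmonic (harmExt j b)) :=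
      fun j => energy_congr n fun y hy => harmonic_f b j hy
    simp only [energy_succ, h, ih, ← Finset.mul_sum, sum_Q_harmExt, pow_succ, mul_assoc]

lemma energy_succ_tent (n : ℕ) : energy (n + 1) tent = 12 * (3 / 5) ^ n := by
  have h : ∀ j, energy n (tent ∘ f j) = (3 / 5) ^ n * 4 := fun j => by
    rw [energy_congr n (g := tent ∘ f j) fun y hy => tent_f j (K_subset_Δ hy), energy_harmonic,
      Q_eq]
    fin_cases j <;> norm_num [Fin.ext_iff]
  simp only [energy_succ, h, Finset.sum_const, Finset.card_univ, Fintype.card_fin]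
  ring

lemma energy_succ_u (n : ℕ) : energy (n + 1) u = 3 / 5 * (energy n u + energy n tent) := by
  have h₀ : energy n (u ∘ f 0) = 3 / 5 * energy n u := by
    rw [energy_congr n (g := u ∘ f 0) fun y hy => u_f_zero hy, energy_const_mul,
      Real.sq_sqrt (by norm_num)]
  have h₁ : energy n (u ∘ f 1) = 3 / 5 * energy n tent := by
    rw [energy_congr n (g := u ∘ f 1) fun y hy => u_f_one hy, energy_const_mul,
      Real.sq_sqrt (by norm_num)]
  have h₂ : energy n (u ∘ f 2) = 0 := by
    rw [energy_congr n (g := u ∘ f 2) (g' := fun _ => 0) fun y hy => u_f_two hy]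
    simp [energy, Q]
  rw [energy_succ, Fin.sum_univ_three, h₀, h₁, h₂]
  ring

lemma energy_succ_u_eq (n : ℕ) : energy (n + 1) u = 12 * n * (3 / 5) ^ n := by
  induction n with
  | zero => simp [energy_succ_u, energy_zero, u_p, tent_p, Q]
  | succ n ih =>
    rw [energy_succ_u, ih, energy_succ_tent]
    push_cast
    ring

lemma a_succ_u (n : ℕ) : a (n + 1) u = 10 * n := by
  rw [a_eq_energy, energy_succ_u_eq]
  have : (5 / 3 : ℝ) ^ (n + 1) * (3 / 5) ^ n = 5 / 3 := by
    rw [pow_succ, mul_right_comm, ← mul_pow]; norm_num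
  linear_combination (6 * n : ℝ) * this

lemma a_nonneg (n : ℕ) (g : ℝ × ℝ → ℝ) : 0 ≤ a n g := by
  unfold a; positivity

lemma summable_two_rpow_mul_of_le_linear {c C : ℝ} (hc : c < 0) {s : ℕ → ℝ}
    (hs₀ : ∀ n, 0 ≤ s n) (hs : ∀ n, s n ≤ C * (n + 1)) :
    Summable fun n : ℕ => (2 : ℝ) ^ (c * (n + 1)) * s n := by
  set r := (2 : ℝ) ^ c
  have hr₀ : 0 < r := Real.rpow_pos_of_pos two_pos c
  have hr₁ : r < 1 := Real.rpow_lt_one_of_one_lt_of_neg one_lt_two hc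
  have hpow : ∀ n : ℕ, (2 : ℝ) ^ (c * (n + 1)) = r ^ n * r := fun n => by
    rw [Real.rpow_mul zero_le_two, ← pow_succ]; exact_mod_cast Real.rpow_natCast r (n + 1)
  have hmaj : Summable fun n : ℕ => C * r * ((n : ℝ) ^ 1 * r ^ n + r ^ n) :=
    ((summable_pow_mul_geometric_of_norm_lt_one 1 (by rwa [Real.norm_of_nonneg hr₀.le])).add
      (summable_geometric_of_lt_one hr₀.le hr₁)).mul_left _
  refine hmaj.of_nonneg_of_le (fun n => by rw [hpow]; have := hs₀ n; positivity) fun n => ?_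
  calc (2 : ℝ) ^ (c * (n + 1)) * s n ≤ r ^ n * r * (C * (n + 1)) := by
        rw [hpow]; gcongr; exact hs n
    _ = _ := by ring

lemma Floc_subset_Fbeta {β : ℝ} (hβ : β < Real.log 5 / Real.log 2) : Floc ⊆ Fbeta β := by
  rintro v ⟨hv, M, hM⟩
  refine ⟨hv, summable_two_rpow_mul_of_le_linear (C := max M 0) (sub_neg.2 hβ)
    (fun n => a_nonneg _ v) fun n => ?_⟩
  calc a (n + 1) v ≤ max M 0 := (hM (mem_range_self n)).trans (le_max_left M 0)
    _ ≤ max M 0 * (n + 1) := le_mul_of_one_le_right (le_max_right M 0) (by simp)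

lemma u_mem_Fbeta {β : ℝ} (hβ : β < Real.log 5 / Real.log 2) : u ∈ Fbeta β :=
  ⟨continuousOn_u, summable_two_rpow_mul_of_le_linear (C := 10) (sub_neg.2 hβ)
    (fun n => a_nonneg _ _) fun n => by rw [a_succ_u]; linarith⟩

lemma u_not_mem_Floc : u ∉ Floc := by
  rintro ⟨-, M, hM⟩
  obtain ⟨n, hn⟩ := exists_nat_gt (M / 10)
  have := hM (mem_range_self n)
  rw [a_succ_u] at this
  linarith

end SG

/-- On the Sierpiński gasket, with `α = log 3 / log 2` and `β* = log 5 / log 2`,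
the domain `F_loc` is strictly contained in `⋂_{β ∈ (α, β*)} F_β`. -/
theorem stmt_3 :
    SG.Floc ⊂ ⋂ β ∈ Set.Ioo (Real.log 3 / Real.log 2) (Real.log 5 / Real.log 2),
      SG.Fbeta β :=
  (ssubset_iff_of_subset fun _ hv => mem_iInter₂.2 fun _ hβ => SG.Floc_subset_Fbeta hβ.2 hv).2
    ⟨SG.u, mem_iInter₂.2 fun _ hβ => SG.u_mem_Fbeta hβ.2, SG.u_not_mem_Floc⟩
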